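/- arXiv:2604.21548 — 7 statements merged into one kernel-verified Lean document; each statement's English description precedes it below -/
import Mathlib

section
/- Let Y ⊆ ℝ^d be compact, let ν be a Borel probability measure on Y, let ε > 0, and let ψ : ℝ^d → ℝ be continuous. Define φ(y₀) := ε·log ∫_Y exp((⟨y₀, y₁⟩ − ψ(y₁))/ε) dν(y₁). Fix y₀ ∈ ℝ^d and suppose x* ∈ ℝ^d is a global maximizer of y ↦ ⟨y₀, y⟩ − ψ(y) over ℝ^d at which ψ is differentiable. Then for every y₁ ∈ Y, exp((⟨y₀, y₁⟩ − φ(y₀) − ψ(y₁))/ε) = exp(−B_ψ(y₁ ∣ x*)/ε) / ∫_Y exp(−B_ψ(y₁' ∣ x*)/ε) dν(y₁'); that is, the conditional density of the Sinkhorn coupling given Y₀ = y₀ is the exponential tilt of ν with the Bregman divergence of ψ as exponent. -/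
open MeasureTheory
open scoped RealInnerProductSpace ENNReal

/-- with `φ(y₀) = ε·log ∫_Y exp((⟪y₀, y₁⟫ - ψ y₁)/ε) dν` the Sinkhorn
potential, and `x*` a global maximizer of `y ↦ ⟪y₀, y⟫ - ψ y` at which `ψ` is
differentiable, the conditional density of the Sinkhorn coupling given `Y₀ = y₀` is the
exponential tilt of `ν` with the Bregman divergence `B_ψ(· ∣ x*)` as exponent:
`exp((⟪y₀, y₁⟫ - φ y₀ - ψ y₁)/ε) = exp(-B_ψ(y₁ ∣ x*)/ε) / ∫_Y exp(-B_ψ(y₁' ∣ x*)/ε) dν`. -/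
theorem stmt3 {d : ℕ} (Y : Set (EuclideanSpace ℝ (Fin d))) (hY : IsCompact Y)
    (ν : Measure (EuclideanSpace ℝ (Fin d))) [IsProbabilityMeasure ν]
    (hνY : ν Yᶜ = 0) (ε : ℝ) (hε : 0 < ε)
    (ψ : EuclideanSpace ℝ (Fin d) → ℝ) (hψ : Continuous ψ)
    (y₀ xs : EuclideanSpace ℝ (Fin d))
    (hmax : ∀ y, ⟪y₀, y⟫ - ψ y ≤ ⟪y₀, xs⟫ - ψ xs)
    (hdiff : DifferentiableAt ℝ ψ xs)
    (φ : EuclideanSpace ℝ (Fin d) → ℝ)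
    (hφ : φ = fun z =>
      ε * Real.log (∫ y₁ in Y, Real.exp ((⟪z, y₁⟫ - ψ y₁) / ε) ∂ν)) :
    ∀ y₁ ∈ Y,
      Real.exp ((⟪y₀, y₁⟫ - φ y₀ - ψ y₁) / ε)
        = Real.exp (-(ψ y₁ - ψ xs - ⟪y₁ - xs, gradient ψ xs⟫) / ε)
          / ∫ z in Y, Real.exp (-(ψ z - ψ xs - ⟪z - xs, gradient ψ xs⟫) / ε) ∂ν := by
  -- The gradient of ψ at xs is y₀, by the first-order condition.
  have hgrad : gradient ψ xs = y₀ := by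
    have hF : HasFDerivAt (fun y => ⟪y₀, y⟫ - ψ y)
        ((innerSL ℝ y₀) - fderiv ℝ ψ xs) xs :=
      (innerSL ℝ y₀).hasFDerivAt.sub hdiff.hasFDerivAt
    have hloc : IsLocalMax (fun y => ⟪y₀, y⟫ - ψ y) xs :=
      Filter.Eventually.of_forall hmax
    have h0 : (innerSL ℝ y₀) - fderiv ℝ ψ xs = 0 := by
      rw [← hF.fderiv]; exact hloc.fderiv_eq_zero
    have hfd : fderiv ℝ ψ xs = innerSL ℝ y₀ := by
      have := sub_eq_zero.mp h0
      exact this.symm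
    rw [gradient, hfd]
    apply (InnerProductSpace.toDual ℝ _).injective
    simp only [LinearIsometryEquiv.apply_symm_apply]
    ext z
    simp [InnerProductSpace.toDual_apply_apply]
  -- simplify the Bregman divergence
  have hB : ∀ z : EuclideanSpace ℝ (Fin d),
      -(ψ z - ψ xs - ⟪z - xs, gradient ψ xs⟫) / ε
        = (⟪y₀, z⟫ - ψ z) / ε + (-(⟪y₀, xs⟫ - ψ xs) / ε) := by
    intro z
    rw [hgrad, inner_sub_left, real_inner_comm z y₀, real_inner_comm xs y₀]
    ring
  set g : EuclideanSpace ℝ (Fin d) → ℝ := fun z => Real.exp ((⟪y₀, z⟫ - ψ z) / ε) with hg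
  have hgc : Continuous g := by
    apply Real.continuous_exp.comp
    exact ((continuous_const.inner continuous_id).sub hψ).div_const ε
  have hgint : IntegrableOn g Y ν := hgc.continuousOn.integrableOn_compact hY
  have hYmeas : MeasurableSet Y := hY.isClosed.measurableSet
  have hνYpos : 0 < ν Y := by
    have : ν Y = 1 := by
      have := measure_add_measure_compl (μ := ν) hYmeas
      rw [hνY, add_zero] at this
      simp [this]
    simp [this]
  have hIpos : 0 < ∫ z in Y, g z ∂ν := by
    rw [setIntegral_pos_iff_support_of_nonneg_ae
      (Filter.Eventually.of_forall fun z => (Real.exp_pos _).le) hgint]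
    have hsupp : Function.support g = Set.univ := by
      ext z; simp [hg, Real.exp_ne_zero]
    rw [hsupp, Set.univ_inter]
    exact hνYpos
  set I : ℝ := ∫ z in Y, g z ∂ν
  intro y₁ hy₁
  have hIden : (∫ z in Y, Real.exp (-(ψ z - ψ xs - ⟪z - xs, gradient ψ xs⟫) / ε) ∂ν)
      = I * Real.exp (-(⟪y₀, xs⟫ - ψ xs) / ε) := by
    rw [← integral_mul_const]
    apply setIntegral_congr_fun hYmeas
    intro z _
    simp only
    rw [hB z, Real.exp_add]
  rw [hIden, hB y₁, Real.exp_add]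
  have hφ0 : φ y₀ = ε * Real.log I := by rw [hφ]
  have hexpφ : Real.exp (φ y₀ / ε) = I := by
    rw [hφ0, mul_div_cancel_left₀ _ (ne_of_gt hε), Real.exp_log hIpos]
  have : (⟪y₀, y₁⟫ - φ y₀ - ψ y₁) / ε = (⟪y₀, y₁⟫ - ψ y₁) / ε - φ y₀ / ε := by ring
  rw [this, Real.exp_sub, hexpφ]
  rw [mul_div_mul_right _ _ (Real.exp_ne_zero _)]
end

section
/- Let K be a compact metric space, let ν be a Borel probability measure on K with full support, let B : K → ℝ be continuous with a unique global minimizer u* ∈ K, and let h : K → ℝ be continuous. Then lim_{ε → 0⁺} (∫_K h(u) exp(−B(u)/ε) dν(u)) / (∫_K exp(−B(u)/ε) dν(u)) = h(u*); that is, the Gibbs measures with energy B and temperature ε concentrate at the unique minimizer of B as ε → 0. -/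
/-!
Off an open neighbourhood `U` of `us`, compactness gives `B ≥ b` for some `b > B us`. For
`B us < c < b` the open set `V = {B < c}` has positive mass since `ν` has full support, so
`∫ e^{-B/ε} dν ≥ ν(V) e^{-c/ε}` and the Gibbs density is at most `e^{-(b-c)/ε} / ν(V)` on `Uᶜ`.
Thus the Gibbs densities are peak functions at `us`, and integrating a continuous `h` against
them converges to `h us`.
-/

open MeasureTheory Measure Filter Topology Real Set

section Gibbs

variable {K : Type*} [MeasurableSpace K] {ν : Measure K} {B : K → ℝ} {ε : ℝ}

noncomputable def gibbsDensity (ν : Measure K) (B : K → ℝ) (ε : ℝ) (u : K) : ℝ :=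
  exp (-B u / ε) / ∫ v, exp (-B v / ε) ∂ν

lemma gibbsDensity_nonneg (u : K) : 0 ≤ gibbsDensity ν B ε u :=
  div_nonneg (exp_pos _).le (integral_nonneg fun _ ↦ (exp_pos _).le)

lemma integral_gibbsDensity [NeZero ν] (hint : Integrable (fun u ↦ exp (-B u / ε)) ν) :
    ∫ u, gibbsDensity ν B ε u ∂ν = 1 := by
  simp only [gibbsDensity]
  rw [integral_div, div_self (integral_exp_pos hint).ne']

lemma integral_gibbsDensity_mul (h : K → ℝ) :
    ∫ u, gibbsDensity ν B ε u * h u ∂ν =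
      (∫ u, h u * exp (-B u / ε) ∂ν) / ∫ u, exp (-B u / ε) ∂ν := by
  simp only [gibbsDensity, div_mul_eq_mul_div, mul_comm (exp _)]
  exact integral_div _ _

lemma measureReal_mul_exp_le_integral_exp [IsFiniteMeasure ν]
    (hint : Integrable (fun u ↦ exp (-B u / ε)) ν) (hε : 0 ≤ ε) {V : Set K}
    (hV : MeasurableSet V) {c : ℝ} (hVc : ∀ v ∈ V, B v ≤ c) :
    ν.real V * exp (-c / ε) ≤ ∫ u, exp (-B u / ε) ∂ν :=
  calc ν.real V * exp (-c / ε) = ∫ _ in V, exp (-c / ε) ∂ν := by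
        rw [setIntegral_const, smul_eq_mul]
    _ ≤ ∫ v in V, exp (-B v / ε) ∂ν :=
        setIntegral_mono_on (integrableOn_const (measure_ne_top ν V)) hint.integrableOn hV
          fun v hv ↦ exp_le_exp.mpr (div_le_div_of_nonneg_right (neg_le_neg (hVc v hv)) hε)
    _ ≤ ∫ u, exp (-B u / ε) ∂ν :=
        setIntegral_le_integral hint (Eventually.of_forall fun _ ↦ (exp_pos _).le)

lemma gibbsDensity_le_of_le [IsFiniteMeasure ν] (hint : Integrable (fun u ↦ exp (-B u / ε)) ν)
    (hε : 0 < ε) {V : Set K} (hV : MeasurableSet V) (hVpos : 0 < ν.real V) {b c : ℝ}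
    (hVc : ∀ v ∈ V, B v ≤ c) {u : K} (hu : b ≤ B u) :
    gibbsDensity ν B ε u ≤ exp (-(b - c) / ε) / ν.real V := by
  have hZ := measureReal_mul_exp_le_integral_exp hint hε.le hV hVc
  calc gibbsDensity ν B ε u ≤ exp (-b / ε) / (ν.real V * exp (-c / ε)) := by
        unfold gibbsDensity
        gcongr
    _ = exp (-(b - c) / ε) / ν.real V := by
        rw [mul_comm, ← div_div, ← exp_sub]
        ring_nf

lemma tendsto_exp_neg_div_nhdsGT_zero {c : ℝ} (hc : 0 < c) :
    Tendsto (fun ε ↦ exp (-c / ε)) (𝓝[>] 0) (𝓝 0) := by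
  have : Tendsto (fun ε : ℝ ↦ -c * ε⁻¹) (𝓝[>] 0) atBot :=
    tendsto_inv_nhdsGT_zero.const_mul_atTop_of_neg (neg_lt_zero.mpr hc)
  simpa only [div_eq_mul_inv, Function.comp_def] using tendsto_exp_atBot.comp this

end Gibbs

section Concentration

variable {K : Type*} [TopologicalSpace K] [CompactSpace K] [MeasurableSpace K]
  [OpensMeasurableSpace K] {ν : Measure K} [IsFiniteMeasure ν]

lemma Continuous.integrable_of_compactSpace {E : Type*} [NormedAddCommGroup E] {f : K → E}
    (hf : Continuous f) : Integrable f ν :=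
  hf.integrable_of_hasCompactSupport (.of_compactSpace f)

lemma tendstoUniformlyOn_gibbsDensity_compl [IsOpenPosMeasure ν] {B : K → ℝ} (hB : Continuous B)
    {us : K} (huniq : ∀ u, B u ≤ B us → u = us) {U : Set K} (hU : IsOpen U) (hus : us ∈ U) :
    TendstoUniformlyOn (gibbsDensity ν B) 0 (𝓝[>] 0) Uᶜ := by
  obtain ⟨b, hb, hbU⟩ : ∃ b, B us < b ∧ ∀ u ∈ Uᶜ, b ≤ B u :=
    hU.isClosed_compl.isCompact.exists_forall_le' hB.continuousOn
      fun u hu ↦ lt_of_not_ge fun hle ↦ hu (huniq u hle ▸ hus)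
  obtain ⟨c, hc, hcb⟩ := exists_between hb
  set V := {v | B v < c}
  have hVpos : 0 < ν.real V := ENNReal.toReal_pos
    ((isOpen_lt hB continuous_const).measure_ne_zero ν ⟨us, hc⟩) (measure_ne_top ν V)
  have hlim := (tendsto_exp_neg_div_nhdsGT_zero (sub_pos.mpr hcb)).div_const (ν.real V)
  rw [zero_div] at hlim
  refine Metric.tendstoUniformlyOn_iff.mpr fun δ hδ ↦ ?_
  filter_upwards [hlim.eventually_lt_const hδ, self_mem_nhdsWithin] with ε hsmall hε u hu
  rw [Pi.zero_apply, dist_zero_left, Real.norm_of_nonneg (gibbsDensity_nonneg u)]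
  exact (gibbsDensity_le_of_le (by fun_prop : Continuous _).integrable_of_compactSpace hε
    (measurableSet_lt hB.measurable measurable_const) hVpos (fun v hv ↦ le_of_lt hv)
    (hbU u hu)).trans_lt hsmall

end Concentration

theorem stmt8_general {K : Type*} [MetricSpace K] [CompactSpace K]
    [MeasurableSpace K] [BorelSpace K]
    (ν : Measure K) [IsProbabilityMeasure ν]
    (hfull : ∀ U : Set K, IsOpen U → U.Nonempty → 0 < ν U)
    (B : K → ℝ) (hB : Continuous B)
    (us : K) (huniq : ∀ u, B u ≤ B us → u = us)
    (h : K → ℝ) (hh : Continuous h) :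
    Filter.Tendsto
      (fun ε : ℝ =>
        (∫ u, h u * Real.exp (-B u / ε) ∂ν) / ∫ u, Real.exp (-B u / ε) ∂ν)
      (nhdsWithin 0 (Set.Ioi 0)) (nhds (h us)) := by
  have : IsOpenPosMeasure ν := ⟨fun U hU hne ↦ (hfull U hU hne).ne'⟩
  have hint (ε : ℝ) : Integrable (fun u ↦ exp (-B u / ε)) ν :=
    (by fun_prop : Continuous _).integrable_of_compactSpace
  have hpeak := tendsto_integral_peak_smul_of_integrable_of_tendsto (μ := ν) (x₀ := us)
    MeasurableSet.univ univ_mem (measure_ne_top ν univ)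
    (Eventually.of_forall fun _ u ↦ gibbsDensity_nonneg u)
    (fun U hU hus ↦ tendstoUniformlyOn_gibbsDensity_compl hB huniq hU hus)
    (tendsto_const_nhds.congr fun ε ↦ by rw [Measure.restrict_univ, integral_gibbsDensity (hint ε)])
    (Eventually.of_forall fun ε ↦ ((hint ε).div_const _).aestronglyMeasurable)
    hh.integrable_of_compactSpace (hh.tendsto us)
  simpa only [smul_eq_mul, integral_gibbsDensity_mul] using hpeak

/-- Gibbs measures with continuous energy `B` on a compact metric space,
with respect to a fully supported probability measure `ν`, concentrate at the unique
global minimizer `u*` of `B` as the temperature `ε → 0⁺`: for every continuous `h`,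
`(∫ h e^{-B/ε} dν) / (∫ e^{-B/ε} dν) → h(u*)`. -/
theorem stmt8 {K : Type*} [MetricSpace K] [CompactSpace K]
    [MeasurableSpace K] [BorelSpace K]
    (ν : Measure K) [IsProbabilityMeasure ν]
    (hfull : ∀ U : Set K, IsOpen U → U.Nonempty → 0 < ν U)
    (B : K → ℝ) (hB : Continuous B)
    (us : K) (hmin : ∀ u, B us ≤ B u) (huniq : ∀ u, B u ≤ B us → u = us)
    (h : K → ℝ) (hh : Continuous h) :
    Filter.Tendsto
      (fun ε : ℝ =>
        (∫ u, h u * Real.exp (-B u / ε) ∂ν) / ∫ u, Real.exp (-B u / ε) ∂ν)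
      (nhdsWithin 0 (Set.Ioi 0)) (nhds (h us)) :=
  stmt8_general ν hfull B hB us huniq h hh
end

section
/- Let Y ⊆ ℝ^d be compact, let μ and ν be Borel probability measures on Y each with full support (support equal to Y), and let ε > 0. Suppose (φ⁰, ψ⁰) and (φ¹, ψ¹) are two pairs of bounded continuous functions Y → ℝ each satisfying the Sinkhorn system: φ(y₀) = ε·log ∫_Y exp((⟨y₀, y₁⟩ − ψ(y₁))/ε) dν(y₁) for all y₀ ∈ Y and ψ(y₁) = ε·log ∫_Y exp((⟨y₀, y₁⟩ − φ(y₀))/ε) dμ(y₀) for all y₁ ∈ Y. Then there exists a constant c ∈ ℝ such that φ¹ = φ⁰ − c and ψ¹ = ψ⁰ + c; consequently φ⁰(y₀) + ψ⁰(y₁) = φ¹(y₀) + ψ¹(y₁) for all (y₀, y₁), and the two Sinkhorn couplings (with densities exp((⟨y₀, y₁⟩ − φⁱ(y₀) − ψⁱ(y₁))/ε) with respect to μ ⊗ ν) coincide. -/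
open MeasureTheory
open scoped RealInnerProductSpace ENNReal

/-!
Put `w y₀ y₁ = exp ((⟪y₀, y₁⟫ - φ⁰ y₀ - ψ⁰ y₁) / ε)`. The Sinkhorn equations for `(φ⁰, ψ⁰)` say
that `w` is doubly stochastic for `μ ⊗ ν` on `Y × Y`; those for `(φ¹, ψ¹)` say that
`f = exp ((φ¹ - φ⁰) / ε)` and `g = exp ((ψ⁰ - ψ¹) / ε)` satisfy `f = ∫ w(·, y₁) g dν` and
`1 / g = ∫ w(y₀, ·) / f dμ`. At a maximum point `y*` of `g` the first identity gives
`f ≤ g y*` on `Y`, so the second writes `1 / g y*` as a `w`-average of `1 / f ≥ 1 / g y*`.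
Continuity and full support of `μ` force `1 / f ≡ 1 / g y*` on `Y`, and then also `g ≡ g y*`.
-/

open Set Real Function

section FullSupport

variable {X Z : Type*} [TopologicalSpace X] [MeasurableSpace X] [TopologicalSpace Z] [T2Space Z]
  {Y : Set X} {μ : Measure X}

theorem eqOn_of_ae_restrict_eq (hYm : MeasurableSet Y)
    (hμ : ∀ U : Set X, IsOpen U → (U ∩ Y).Nonempty → 0 < μ (U ∩ Y))
    {f g : X → Z} (hf : ContinuousOn f Y) (hg : ContinuousOn g Y) (hfg : f =ᵐ[μ.restrict Y] g) :
    EqOn f g Y := by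
  intro y hy
  by_contra hne
  obtain ⟨U, hU, hyU, hUne⟩ := mem_nhdsWithin.1 <|
    ((hf y hy).prodMk_nhds (hg y hy)).eventually (isClosed_diagonal.isOpen_compl.mem_nhds hne)
  have hnull : μ (U ∩ Y) = 0 := by
    rw [Filter.EventuallyEq, ae_iff, Measure.restrict_apply' hYm] at hfg
    refine measure_mono_null ?_ hfg
    exact fun z hz => ⟨hUne hz, hz.2⟩
  exact (hμ U hU ⟨y, hyU, hy⟩).ne' hnull

end FullSupport

section WeightedAverage

variable {X : Type*} [MeasurableSpace X] {Y : Set X} {μ : Measure X} {w v : X → ℝ} {β : ℝ}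

theorem setIntegral_mul_le_of_le (hYm : MeasurableSet Y) (hw : ∀ y ∈ Y, 0 ≤ w y)
    (hw_int : IntegrableOn w Y μ) (hwv_int : IntegrableOn (fun y => w y * v y) Y μ)
    (hw_one : ∫ y in Y, w y ∂μ = 1) (hv : ∀ y ∈ Y, v y ≤ β) :
    ∫ y in Y, w y * v y ∂μ ≤ β :=
  calc ∫ y in Y, w y * v y ∂μ ≤ ∫ y in Y, w y * β ∂μ :=
        setIntegral_mono_on hwv_int (hw_int.mul_const β) hYm fun y hy =>
          mul_le_mul_of_nonneg_left (hv y hy) (hw y hy)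
    _ = β := by rw [integral_mul_const, hw_one, one_mul]

theorem eqOn_of_setIntegral_mul_eq_of_le [TopologicalSpace X] (hYm : MeasurableSet Y)
    (hμ : ∀ U : Set X, IsOpen U → (U ∩ Y).Nonempty → 0 < μ (U ∩ Y))
    (hw : ∀ y ∈ Y, 0 < w y) (hw_cont : ContinuousOn w Y) (hv_cont : ContinuousOn v Y)
    (hw_int : IntegrableOn w Y μ) (hwv_int : IntegrableOn (fun y => w y * v y) Y μ)
    (hw_one : ∫ y in Y, w y ∂μ = 1) (hv : ∀ y ∈ Y, β ≤ v y)
    (hwv : ∫ y in Y, w y * v y ∂μ = β) :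
    ∀ y ∈ Y, v y = β := by
  have hgap_int : IntegrableOn (fun y => w y * (v y - β)) Y μ := by
    simp_rw [mul_sub]
    exact hwv_int.sub (hw_int.mul_const β)
  have hgap_zero : ∫ y in Y, w y * (v y - β) ∂μ = 0 := by
    simp only [mul_sub]
    rw [integral_sub hwv_int (hw_int.mul_const β), integral_mul_const, hw_one, hwv, one_mul,
      sub_self]
  have hgap_nonneg : 0 ≤ᵐ[μ.restrict Y] fun y => w y * (v y - β) :=
    (ae_restrict_iff' hYm).2 <| Filter.Eventually.of_forall fun y hy =>
      mul_nonneg (hw y hy).le (sub_nonneg.2 (hv y hy))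
  have hgap : EqOn (fun y => w y * (v y - β)) 0 Y :=
    eqOn_of_ae_restrict_eq hYm hμ (hw_cont.mul (hv_cont.sub continuousOn_const))
      continuousOn_const ((setIntegral_eq_zero_iff_of_nonneg_ae hgap_nonneg hgap_int).1 hgap_zero)
  intro y hy
  have := hgap hy
  simp only [Pi.zero_apply, mul_eq_zero, (hw y hy).ne', false_or, sub_eq_zero] at this
  exact this

end WeightedAverage

variable {X : Type*} [TopologicalSpace X] [T2Space X] [MeasurableSpace X] [OpensMeasurableSpace X]
  {Y : Set X} {μ ν : Measure X}

theorem exists_const_of_doublyStochastic_scaling (hY : IsCompact Y) (hYne : Y.Nonempty)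
    [IsFiniteMeasure μ] [IsFiniteMeasure ν]
    (hμ : ∀ U : Set X, IsOpen U → (U ∩ Y).Nonempty → 0 < μ (U ∩ Y))
    {w : X → X → ℝ} (hw : ∀ y₀ ∈ Y, ∀ y₁ ∈ Y, 0 < w y₀ y₁)
    (hw_cont_right : ∀ y₀ ∈ Y, ContinuousOn (w y₀) Y)
    (hw_cont_left : ∀ y₁ ∈ Y, ContinuousOn (w · y₁) Y)
    (hw_right : ∀ y₀ ∈ Y, ∫ y₁ in Y, w y₀ y₁ ∂ν = 1)
    (hw_left : ∀ y₁ ∈ Y, ∫ y₀ in Y, w y₀ y₁ ∂μ = 1)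
    {f g : X → ℝ} (hf_cont : ContinuousOn f Y) (hg_cont : ContinuousOn g Y)
    (hf : ∀ y ∈ Y, 0 < f y)
    (hfg : ∀ y₀ ∈ Y, ∫ y₁ in Y, w y₀ y₁ * g y₁ ∂ν = f y₀)
    (hgf : ∀ y₁ ∈ Y, ∫ y₀ in Y, w y₀ y₁ * (f y₀)⁻¹ ∂μ = (g y₁)⁻¹) :
    ∃ β, (∀ y ∈ Y, f y = β) ∧ (∀ y ∈ Y, g y = β) := by
  have hYm := hY.measurableSet
  obtain ⟨y', hy', hg_max⟩ := hY.exists_isMaxOn hYne hg_cont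
  have hf_le : ∀ y ∈ Y, f y ≤ g y' := fun y₀ hy₀ =>
    hfg y₀ hy₀ ▸ setIntegral_mul_le_of_le hYm (fun y₁ hy₁ => (hw y₀ hy₀ y₁ hy₁).le)
      ((hw_cont_right y₀ hy₀).integrableOn_compact hY)
      (((hw_cont_right y₀ hy₀).mul hg_cont).integrableOn_compact hY) (hw_right y₀ hy₀) hg_max
  have hf_inv_cont : ContinuousOn (fun y => (f y)⁻¹) Y :=
    hf_cont.inv₀ fun y hy => (hf y hy).ne'
  have hf_inv : ∀ y ∈ Y, (f y)⁻¹ = (g y')⁻¹ :=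
    eqOn_of_setIntegral_mul_eq_of_le hYm hμ (fun y₀ hy₀ => hw y₀ hy₀ y' hy')
      (hw_cont_left y' hy') hf_inv_cont ((hw_cont_left y' hy').integrableOn_compact hY)
      (((hw_cont_left y' hy').mul hf_inv_cont).integrableOn_compact hY) (hw_left y' hy')
      (fun y hy => inv_anti₀ (hf y hy) (hf_le y hy)) (hgf y' hy')
  refine ⟨g y', fun y hy => inv_injective (hf_inv y hy), fun y₁ hy₁ => inv_injective ?_⟩
  rw [← hgf y₁ hy₁, setIntegral_congr_fun hYm fun y₀ hy₀ => congrArg _ (hf_inv y₀ hy₀),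
    integral_mul_const, hw_left y₁ hy₁, one_mul]

theorem setIntegral_exp_sub_div_of_eq_mul_log (hY : IsCompact Y) [IsFiniteMeasure ν]
    (hνY : ν Y ≠ 0) {ε : ℝ} (hε : ε ≠ 0) {F : X → ℝ} (hF : ContinuousOn F Y) {a : ℝ}
    (ha : a = ε * log (∫ y in Y, exp (F y / ε) ∂ν)) (b : ℝ) :
    ∫ y in Y, exp ((F y - b) / ε) ∂ν = exp ((a - b) / ε) := by
  have : NeZero (ν.restrict Y) := ⟨by simpa using hνY⟩
  have hpos : 0 < ∫ y in Y, exp (F y / ε) ∂ν :=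
    integral_exp_pos ((hF.div_const ε).rexp.integrableOn_compact hY)
  simp_rw [sub_div, exp_sub]
  rw [integral_div, ha, mul_div_cancel_left₀ _ hε, exp_log hpos]

/-- In the paper `k y₀ y₁ = ⟪y₀, y₁⟫`. -/
def IsSinkhornSolution (k : X → X → ℝ) (Y : Set X) (μ ν : Measure X) (ε : ℝ) (φ ψ : X → ℝ) :
    Prop :=
  (∀ y₀ ∈ Y, φ y₀ = ε * log (∫ y₁ in Y, exp ((k y₀ y₁ - ψ y₁) / ε) ∂ν)) ∧
    ∀ y₁ ∈ Y, ψ y₁ = ε * log (∫ y₀ in Y, exp ((k y₀ y₁ - φ y₀) / ε) ∂μ)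

namespace IsSinkhornSolution

variable {k : X → X → ℝ} {ε : ℝ} {φ ψ : X → ℝ}

theorem setIntegral_exp_right (hS : IsSinkhornSolution k Y μ ν ε φ ψ) (hY : IsCompact Y)
    [IsFiniteMeasure ν] (hνY : ν Y ≠ 0) (hε : ε ≠ 0) (hk : Continuous (uncurry k))
    (hψ : ContinuousOn ψ Y) (a : X → ℝ) {y₀ : X} (hy₀ : y₀ ∈ Y) :
    ∫ y₁ in Y, exp ((k y₀ y₁ - a y₀ - ψ y₁) / ε) ∂ν = exp ((φ y₀ - a y₀) / ε) := by
  simp_rw [sub_right_comm _ (a y₀)]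
  exact setIntegral_exp_sub_div_of_eq_mul_log hY hνY hε
    ((hk.uncurry_left y₀).continuousOn.sub hψ) (hS.1 y₀ hy₀) (a y₀)

theorem setIntegral_exp_left (hS : IsSinkhornSolution k Y μ ν ε φ ψ) (hY : IsCompact Y)
    [IsFiniteMeasure μ] (hμY : μ Y ≠ 0) (hε : ε ≠ 0) (hk : Continuous (uncurry k))
    (hφ : ContinuousOn φ Y) (a : X → ℝ) {y₁ : X} (hy₁ : y₁ ∈ Y) :
    ∫ y₀ in Y, exp ((k y₀ y₁ - φ y₀ - a y₁) / ε) ∂μ = exp ((ψ y₁ - a y₁) / ε) :=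
  setIntegral_exp_sub_div_of_eq_mul_log hY hμY hε
    ((hk.uncurry_right y₁).continuousOn.sub hφ) (hS.2 y₁ hy₁) (a y₁)

end IsSinkhornSolution

theorem IsSinkhornSolution.exists_sub_const {k : X → X → ℝ} {ε : ℝ} {φ₀ ψ₀ φ₁ ψ₁ : X → ℝ}
    (h₀ : IsSinkhornSolution k Y μ ν ε φ₀ ψ₀) (h₁ : IsSinkhornSolution k Y μ ν ε φ₁ ψ₁)
    (hY : IsCompact Y) [IsFiniteMeasure μ] [IsFiniteMeasure ν] (hνY : ν Y ≠ 0)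
    (hμ : ∀ U : Set X, IsOpen U → (U ∩ Y).Nonempty → 0 < μ (U ∩ Y))
    (hε : ε ≠ 0) (hk : Continuous (uncurry k))
    (hφ₀ : ContinuousOn φ₀ Y) (hψ₀ : ContinuousOn ψ₀ Y)
    (hφ₁ : ContinuousOn φ₁ Y) (hψ₁ : ContinuousOn ψ₁ Y) :
    ∃ c, (∀ y ∈ Y, φ₁ y = φ₀ y - c) ∧ (∀ y ∈ Y, ψ₁ y = ψ₀ y + c) := by
  have hYne : Y.Nonempty := nonempty_of_measure_ne_zero hνY
  have hμY : μ Y ≠ 0 := by simpa using (hμ univ isOpen_univ (by simpa using hYne)).ne'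
  obtain ⟨β, hf, hg⟩ := exists_const_of_doublyStochastic_scaling hY hYne hμ
    (w := fun y₀ y₁ => exp ((k y₀ y₁ - φ₀ y₀ - ψ₀ y₁) / ε))
    (f := fun y => exp ((φ₁ y - φ₀ y) / ε)) (g := fun y => exp ((ψ₀ y - ψ₁ y) / ε))
    (fun _ _ _ _ => exp_pos _)
    (fun y₀ _ => ((((hk.uncurry_left y₀).continuousOn.sub continuousOn_const).sub hψ₀).div_const
      ε).rexp)
    (fun y₁ _ => ((((hk.uncurry_right y₁).continuousOn.sub hφ₀).sub continuousOn_const).div_const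
      ε).rexp)
    (fun y₀ hy₀ => by simpa using h₀.setIntegral_exp_right hY hνY hε hk hψ₀ φ₀ hy₀)
    (fun y₁ hy₁ => by simpa using h₀.setIntegral_exp_left hY hμY hε hk hφ₀ ψ₀ hy₁)
    ((hφ₁.sub hφ₀).div_const ε).rexp ((hψ₀.sub hψ₁).div_const ε).rexp (fun _ _ => exp_pos _)
    (fun y₀ hy₀ => by
      rw [← h₁.setIntegral_exp_right hY hνY hε hk hψ₁ φ₀ hy₀]
      congr with y₁
      rw [← exp_add]
      ring_nf)
    (fun y₁ hy₁ => by
      rw [← exp_neg, ← neg_div, neg_sub, ← h₁.setIntegral_exp_left hY hμY hε hk hφ₁ ψ₀ hy₁]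
      congr with y₀
      rw [← exp_neg, ← exp_add]
      ring_nf)
  have exp_div_inj {a b : ℝ} (h : exp (a / ε) = exp (b / ε)) : a = b :=
    (div_left_inj' hε).1 (exp_injective h)
  obtain ⟨y, hy⟩ := hYne
  refine ⟨ψ₁ y - ψ₀ y, fun y' hy' => ?_, fun y' hy' => ?_⟩
  · linarith [exp_div_inj ((hf y' hy').trans (hg y hy).symm)]
  · linarith [exp_div_inj ((hg y' hy').trans (hg y hy).symm)]

theorem stmt10_general {d : ℕ} (Y : Set (EuclideanSpace ℝ (Fin d))) (hY : IsCompact Y)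
    (μ ν : Measure (EuclideanSpace ℝ (Fin d)))
    [IsProbabilityMeasure μ] [IsProbabilityMeasure ν]
    (hμY : μ Yᶜ = 0) (hνY : ν Yᶜ = 0)
    (hμfull : ∀ U : Set (EuclideanSpace ℝ (Fin d)),
      IsOpen U → (U ∩ Y).Nonempty → 0 < μ (U ∩ Y))
    (ε : ℝ) (hε : 0 < ε)
    (φ0 ψ0 φ1 ψ1 : EuclideanSpace ℝ (Fin d) → ℝ)
    (hφ0 : ContinuousOn φ0 Y) (hψ0 : ContinuousOn ψ0 Y)
    (hφ1 : ContinuousOn φ1 Y) (hψ1 : ContinuousOn ψ1 Y)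
    (hS0a : ∀ y₀ ∈ Y, φ0 y₀
      = ε * Real.log (∫ y₁ in Y, Real.exp ((⟪y₀, y₁⟫ - ψ0 y₁) / ε) ∂ν))
    (hS0b : ∀ y₁ ∈ Y, ψ0 y₁
      = ε * Real.log (∫ y₀ in Y, Real.exp ((⟪y₀, y₁⟫ - φ0 y₀) / ε) ∂μ))
    (hS1a : ∀ y₀ ∈ Y, φ1 y₀
      = ε * Real.log (∫ y₁ in Y, Real.exp ((⟪y₀, y₁⟫ - ψ1 y₁) / ε) ∂ν))
    (hS1b : ∀ y₁ ∈ Y, ψ1 y₁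
      = ε * Real.log (∫ y₀ in Y, Real.exp ((⟪y₀, y₁⟫ - φ1 y₀) / ε) ∂μ)) :
    ∃ c : ℝ,
      (∀ y ∈ Y, φ1 y = φ0 y - c) ∧ (∀ y ∈ Y, ψ1 y = ψ0 y + c) ∧
      (∀ y₀ ∈ Y, ∀ y₁ ∈ Y, φ0 y₀ + ψ0 y₁ = φ1 y₀ + ψ1 y₁) ∧
      (μ.prod ν).withDensity
          (fun p => ENNReal.ofReal (Real.exp ((⟪p.1, p.2⟫ - φ0 p.1 - ψ0 p.2) / ε)))
        = (μ.prod ν).withDensity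
          (fun p => ENNReal.ofReal (Real.exp ((⟪p.1, p.2⟫ - φ1 p.1 - ψ1 p.2) / ε))) := by
  have hYm := hY.measurableSet
  have hνY' : ν Y ≠ 0 := by simp [(prob_compl_eq_zero_iff hYm).1 hνY]
  obtain ⟨c, hφ, hψ⟩ := IsSinkhornSolution.exists_sub_const (k := fun y₀ y₁ => ⟪y₀, y₁⟫)
    ⟨hS0a, hS0b⟩ ⟨hS1a, hS1b⟩ hY hνY' hμfull hε.ne' continuous_inner hφ0 hψ0 hφ1 hψ1
  have hsum : ∀ y₀ ∈ Y, ∀ y₁ ∈ Y, φ0 y₀ + ψ0 y₁ = φ1 y₀ + ψ1 y₁ := fun y₀ hy₀ y₁ hy₁ => by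
    rw [hφ y₀ hy₀, hψ y₁ hy₁]
    ring
  have hYY : ∀ᵐ p ∂μ.prod ν, p.1 ∈ Y ∧ p.2 ∈ Y :=
    (Measure.quasiMeasurePreserving_fst.ae (mem_ae_iff.2 hμY)).and
      (Measure.quasiMeasurePreserving_snd.ae (mem_ae_iff.2 hνY))
  refine ⟨c, hφ, hψ, hsum, withDensity_congr_ae ?_⟩
  filter_upwards [hYY] with p hp
  rw [sub_sub, sub_sub, hsum p.1 hp.1 p.2 hp.2]

/-- uniqueness of Sinkhorn potentials: if two pairs of bounded continuous
potentials on a compact `Y ⊆ ℝ^d` both solve the Sinkhorn system for fully supported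
probability measures `μ, ν` on `Y`, then they differ by opposite additive constants;
consequently the sums `φ ⊕ ψ` agree on `Y × Y` and the two Sinkhorn couplings coincide. -/
theorem stmt10 {d : ℕ} (Y : Set (EuclideanSpace ℝ (Fin d))) (hY : IsCompact Y)
    (μ ν : Measure (EuclideanSpace ℝ (Fin d)))
    [IsProbabilityMeasure μ] [IsProbabilityMeasure ν]
    (hμY : μ Yᶜ = 0) (hνY : ν Yᶜ = 0)
    (hμfull : ∀ U : Set (EuclideanSpace ℝ (Fin d)),
      IsOpen U → (U ∩ Y).Nonempty → 0 < μ (U ∩ Y))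
    (hνfull : ∀ U : Set (EuclideanSpace ℝ (Fin d)),
      IsOpen U → (U ∩ Y).Nonempty → 0 < ν (U ∩ Y))
    (ε : ℝ) (hε : 0 < ε)
    (φ0 ψ0 φ1 ψ1 : EuclideanSpace ℝ (Fin d) → ℝ)
    (hφ0 : ContinuousOn φ0 Y) (hψ0 : ContinuousOn ψ0 Y)
    (hφ1 : ContinuousOn φ1 Y) (hψ1 : ContinuousOn ψ1 Y)
    (hS0a : ∀ y₀ ∈ Y, φ0 y₀
      = ε * Real.log (∫ y₁ in Y, Real.exp ((⟪y₀, y₁⟫ - ψ0 y₁) / ε) ∂ν))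
    (hS0b : ∀ y₁ ∈ Y, ψ0 y₁
      = ε * Real.log (∫ y₀ in Y, Real.exp ((⟪y₀, y₁⟫ - φ0 y₀) / ε) ∂μ))
    (hS1a : ∀ y₀ ∈ Y, φ1 y₀
      = ε * Real.log (∫ y₁ in Y, Real.exp ((⟪y₀, y₁⟫ - ψ1 y₁) / ε) ∂ν))
    (hS1b : ∀ y₁ ∈ Y, ψ1 y₁
      = ε * Real.log (∫ y₀ in Y, Real.exp ((⟪y₀, y₁⟫ - φ1 y₀) / ε) ∂μ)) :
    ∃ c : ℝ,
      (∀ y ∈ Y, φ1 y = φ0 y - c) ∧ (∀ y ∈ Y, ψ1 y = ψ0 y + c) ∧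
      (∀ y₀ ∈ Y, ∀ y₁ ∈ Y, φ0 y₀ + ψ0 y₁ = φ1 y₀ + ψ1 y₁) ∧
      (μ.prod ν).withDensity
          (fun p => ENNReal.ofReal (Real.exp ((⟪p.1, p.2⟫ - φ0 p.1 - ψ0 p.2) / ε)))
        = (μ.prod ν).withDensity
          (fun p => ENNReal.ofReal (Real.exp ((⟪p.1, p.2⟫ - φ1 p.1 - ψ1 p.2) / ε))) :=
  stmt10_general Y hY μ ν hμY hνY hμfull ε hε φ0 ψ0 φ1 ψ1 hφ0 hψ0 hφ1 hψ1 hS0a hS0b hS1a hS1b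
end

section
/- Let Y ⊆ ℝ^d be compact, let ν be a Borel probability measure on Y with full support, and let ε > 0. For a continuous function ψ : Y → ℝ define S(ψ)(y₀) := ε·log ∫_Y exp((⟨y₀, y₁⟩ − ψ(y₁))/ε) dν(y₁) for y₀ ∈ Y. If ψ⁰, ψ¹ : Y → ℝ are continuous and ψ¹ − ψ⁰ is not constant, then sup_{y₀ ∈ Y} |S(ψ¹)(y₀) − S(ψ⁰)(y₀)| < sup_{y₁ ∈ Y} |ψ¹(y₁) − ψ⁰(y₁)|; that is, the Sinkhorn update is a strict sup-norm contraction on non-constant differences. -/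
/-!
Write `f = ψ¹ - ψ⁰` and `M = sup_Y |f|`. For fixed `y₀`,
`S ψ¹ y₀ - S ψ⁰ y₀ = ε log (∫_Y h w dν / ∫_Y h dν)` with `h = exp ((⟪y₀, ·⟫ - ψ⁰) / ε)` and
`w = exp (-f / ε) ≤ exp (M / ε)`. By compactness `h` is pinched between two positive constants
uniformly in `y₀`, and since `f` is continuous but not identically `-M` and `ν` has full support,
`∫_Y (exp (M / ε) - w) dν > 0`. Together these keep the ratio uniformly below `exp (M / ε)`, so
`S ψ¹ - S ψ⁰ ≤ M - δ` on `Y` for some `δ > 0`; exchanging `ψ⁰` and `ψ¹` gives the other side.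
-/

open MeasureTheory Set Function
open scoped RealInnerProductSpace

section FullSupport

variable {α : Type*} [TopologicalSpace α] [MeasurableSpace α]

def HasFullSupportOn (ν : Measure α) (Y : Set α) : Prop :=
  ∀ U : Set α, IsOpen U → (U ∩ Y).Nonempty → 0 < ν (U ∩ Y)

variable {ν : Measure α} {Y : Set α}

lemma HasFullSupportOn.neZero_restrict (hν : HasFullSupportOn ν Y) (hY : Y.Nonempty) :
    NeZero (ν.restrict Y) := by
  refine ⟨fun h => ?_⟩
  have := hν univ isOpen_univ (by simpa using hY)
  rw [univ_inter, ← Measure.restrict_apply_self, h] at this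
  exact this.false

lemma HasFullSupportOn.setIntegral_pos (hν : HasFullSupportOn ν Y) {f : α → ℝ}
    (hf : ContinuousOn f Y) (hfi : IntegrableOn f Y ν) (hY : MeasurableSet Y)
    (hnonneg : ∀ y ∈ Y, 0 ≤ f y) (hpos : ∃ y ∈ Y, 0 < f y) :
    0 < ∫ y in Y, f y ∂ν := by
  rw [setIntegral_pos_iff_support_of_nonneg_ae ((ae_restrict_iff' hY).2 (ae_of_all _ hnonneg)) hfi]
  obtain ⟨U, hU, hUY⟩ := continuousOn_iff'.1 hf (Ioi 0) isOpen_Ioi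
  obtain ⟨y, hy, hfy⟩ := hpos
  refine (hν U hU ?_).trans_le (measure_mono ?_)
  · exact ⟨y, hUY ▸ ⟨hfy, hy⟩⟩
  · rw [← hUY]
    exact fun z hz => ⟨(mem_Ioi.1 hz.1).ne', hz.2⟩

end FullSupport

lemma setIntegral_mul_le_sub_mul {α : Type*} [MeasurableSpace α] {μ : Measure α}
    [IsFiniteMeasure μ] {s : Set α} (hs : MeasurableSet s) {h g : α → ℝ} {a G : ℝ}
    (hh : IntegrableOn h s μ) (hg : IntegrableOn g s μ)
    (hhg : IntegrableOn (fun x => h x * g x) s μ)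
    (ha : ∀ x ∈ s, a ≤ h x) (hgG : ∀ x ∈ s, g x ≤ G) :
    ∫ x in s, h x * g x ∂μ ≤ G * (∫ x in s, h x ∂μ) - a * ∫ x in s, (G - g x) ∂μ := by
  have hgap : a * ∫ x in s, (G - g x) ∂μ ≤ ∫ x in s, h x * (G - g x) ∂μ := by
    rw [← integral_const_mul]
    refine setIntegral_mono_on (((integrableOn_const (C := G)).sub hg).const_mul a) ?_ hs
      fun x hx => mul_le_mul_of_nonneg_right (ha x hx) (sub_nonneg.2 (hgG x hx))
    simp only [mul_sub, mul_comm _ G]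
    exact (hh.const_mul G).sub hhg
  have hsplit : ∫ x in s, h x * (G - g x) ∂μ
      = G * (∫ x in s, h x ∂μ) - ∫ x in s, h x * g x ∂μ := by
    simp only [mul_sub]
    rw [integral_sub (hh.mul_const G) hhg, integral_mul_const, mul_comm]
  linarith

section Sinkhorn

variable {α : Type*} [TopologicalSpace α] {c : α → α → ℝ} {Y : Set α} {ε : ℝ} {ψ : α → ℝ}

lemma continuousOn_exp_kernel (hc : ContinuousOn (uncurry c) (Y ×ˢ Y)) {y₀ : α} (hy₀ : y₀ ∈ Y)
    (hψ : ContinuousOn ψ Y) : ContinuousOn (fun y => Real.exp ((c y₀ y - ψ y) / ε)) Y :=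
  (((hc.comp (continuousOn_const.prodMk continuousOn_id) fun _ hy => ⟨hy₀, hy⟩).sub hψ).div_const
    ε).rexp

lemma exists_exp_kernel_bounds (hY : IsCompact Y) (hc : ContinuousOn (uncurry c) (Y ×ˢ Y))
    (hψ : ContinuousOn ψ Y) (ε : ℝ) :
    ∃ K : ℝ, ∀ y₀ ∈ Y, ∀ y ∈ Y, Real.exp (-K) ≤ Real.exp ((c y₀ y - ψ y) / ε) ∧
      Real.exp ((c y₀ y - ψ y) / ε) ≤ Real.exp K := by
  obtain ⟨K, hK⟩ := (hY.prod hY).exists_bound_of_continuousOn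
    ((hc.sub (hψ.comp continuousOn_snd fun _ hp => hp.2)).div_const ε)
  refine ⟨K, fun y₀ hy₀ y hy => ?_⟩
  obtain ⟨hlo, hhi⟩ := abs_le.1 (hK (y₀, y) ⟨hy₀, hy⟩)
  exact ⟨Real.exp_le_exp.2 hlo, Real.exp_le_exp.2 hhi⟩

variable [MeasurableSpace α]

noncomputable def sinkhornUpdate (c : α → α → ℝ) (ν : Measure α) (Y : Set α) (ε : ℝ)
    (ψ : α → ℝ) (y₀ : α) : ℝ :=
  ε * Real.log (∫ y₁ in Y, Real.exp ((c y₀ y₁ - ψ y₁) / ε) ∂ν)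

variable [T2Space α] [OpensMeasurableSpace α] {ν : Measure α} [IsFiniteMeasure ν]
  {ψ0 ψ1 : α → ℝ} {m : ℝ}

lemma exists_pos_forall_integral_exp_le (hY : IsCompact Y) (hν : HasFullSupportOn ν Y)
    (hc : ContinuousOn (uncurry c) (Y ×ˢ Y)) (hψ0 : ContinuousOn ψ0 Y) (hψ1 : ContinuousOn ψ1 Y)
    (hm : ∀ y ∈ Y, m ≤ ψ1 y - ψ0 y) (hlt : ∃ y ∈ Y, m < ψ1 y - ψ0 y) (hε : 0 < ε) :
    ∃ κ > 0, ∀ y₀ ∈ Y, ∫ y in Y, Real.exp ((c y₀ y - ψ1 y) / ε) ∂ν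
      ≤ (Real.exp (-m / ε) - κ) * ∫ y in Y, Real.exp ((c y₀ y - ψ0 y) / ε) ∂ν := by
  set G := Real.exp (-m / ε)
  set w := fun y => Real.exp (-(ψ1 y - ψ0 y) / ε)
  have hYm : MeasurableSet Y := hY.isClosed.measurableSet
  have hw : ContinuousOn w Y := ((hψ1.sub hψ0).neg.div_const ε).rexp
  have hwG : ∀ y ∈ Y, w y ≤ G := fun y hy =>
    Real.exp_le_exp.2 (div_le_div_of_nonneg_right (by linarith [hm y hy]) hε.le)
  have hgap : 0 < ∫ y in Y, (G - w y) ∂ν := by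
    refine hν.setIntegral_pos (continuousOn_const.sub hw)
      ((continuousOn_const.sub hw).integrableOn_compact hY) hYm
      (fun y hy => sub_nonneg.2 (hwG y hy)) ?_
    obtain ⟨y, hy, hmy⟩ := hlt
    exact ⟨y, hy, sub_pos.2 (Real.exp_lt_exp.2 (div_lt_div_of_pos_right (by linarith) hε))⟩
  set Δ := ∫ y in Y, (G - w y) ∂ν
  obtain ⟨K, hK⟩ := exists_exp_kernel_bounds hY hc hψ0 ε
  have hνY : 0 < ν.real Y := by
    obtain ⟨y, hy, -⟩ := hlt
    have := hν univ isOpen_univ ⟨y, trivial, hy⟩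
    rw [univ_inter] at this
    exact ENNReal.toReal_pos this.ne' (measure_ne_top ν Y)
  refine ⟨Real.exp (-K) * Δ / (Real.exp K * ν.real Y), by positivity, fun y₀ hy₀ => ?_⟩
  set h := fun y => Real.exp ((c y₀ y - ψ0 y) / ε)
  have hh : IntegrableOn h Y ν := (continuousOn_exp_kernel hc hy₀ hψ0).integrableOn_compact hY
  have hA : ∫ y in Y, h y ∂ν ≤ Real.exp K * ν.real Y := by
    simpa [setIntegral_const, mul_comm] using
      setIntegral_mono_on hh integrableOn_const hYm fun y hy => (hK y₀ hy₀ y hy).2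
  have hhw : ∀ y, h y * w y = Real.exp ((c y₀ y - ψ1 y) / ε) := fun y => by
    rw [← Real.exp_add]; congr 1; ring
  have hB := setIntegral_mul_le_sub_mul hYm hh (hw.integrableOn_compact hY)
    (by simpa only [hhw] using (continuousOn_exp_kernel hc hy₀ hψ1).integrableOn_compact hY)
    (fun y hy => (hK y₀ hy₀ y hy).1) hwG
  simp only [hhw] at hB
  have hκA : Real.exp (-K) * Δ / (Real.exp K * ν.real Y) * ∫ y in Y, h y ∂ν
      ≤ Real.exp (-K) * Δ := by
    rw [div_mul_eq_mul_div, div_le_iff₀ (by positivity)]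
    exact mul_le_mul_of_nonneg_left hA (by positivity)
  rw [sub_mul]
  linarith

lemma exists_pos_forall_sinkhornUpdate_le (hY : IsCompact Y) (hν : HasFullSupportOn ν Y)
    (hc : ContinuousOn (uncurry c) (Y ×ˢ Y)) (hψ0 : ContinuousOn ψ0 Y) (hψ1 : ContinuousOn ψ1 Y)
    (hm : ∀ y ∈ Y, m ≤ ψ1 y - ψ0 y) (hlt : ∃ y ∈ Y, m < ψ1 y - ψ0 y) (hε : 0 < ε) :
    ∃ δ > 0, ∀ y₀ ∈ Y, sinkhornUpdate c ν Y ε ψ1 y₀ ≤ sinkhornUpdate c ν Y ε ψ0 y₀ - m - δ := by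
  obtain ⟨κ, hκ0, hκ⟩ := exists_pos_forall_integral_exp_le hY hν hc hψ0 hψ1 hm hlt hε
  have hint : ∀ ψ, ContinuousOn ψ Y → ∀ y₀ ∈ Y, 0 < ∫ y in Y, Real.exp ((c y₀ y - ψ y) / ε) ∂ν :=
    fun ψ hψ y₀ hy₀ =>
      have := hν.neZero_restrict ⟨y₀, hy₀⟩
      integral_exp_pos ((continuousOn_exp_kernel hc hy₀ hψ).integrableOn_compact hY)
  obtain ⟨y, hy, -⟩ := hlt
  have hq : 0 < Real.exp (-m / ε) - κ :=
    pos_of_mul_pos_left ((hint ψ1 hψ1 y hy).trans_le (hκ y hy)) (hint ψ0 hψ0 y hy).le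
  refine ⟨ε * (-m / ε - Real.log (Real.exp (-m / ε) - κ)), ?_, fun y₀ hy₀ => ?_⟩
  · refine mul_pos hε (sub_pos.2 ((Real.log_lt_iff_lt_exp hq).2 (by linarith)))
  · unfold sinkhornUpdate
    calc ε * Real.log (∫ y in Y, Real.exp ((c y₀ y - ψ1 y) / ε) ∂ν)
        ≤ ε * Real.log ((Real.exp (-m / ε) - κ) * ∫ y in Y, Real.exp ((c y₀ y - ψ0 y) / ε) ∂ν) :=
          mul_le_mul_of_nonneg_left (Real.log_le_log (hint ψ1 hψ1 y₀ hy₀) (hκ y₀ hy₀)) hε.le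
      _ = _ := by
          rw [Real.log_mul hq.ne' (hint ψ0 hψ0 y₀ hy₀).ne']
          field_simp
          ring

end Sinkhorn

theorem stmt11_general {d : ℕ} (Y : Set (EuclideanSpace ℝ (Fin d))) (hY : IsCompact Y)
    (ν : Measure (EuclideanSpace ℝ (Fin d))) [IsProbabilityMeasure ν]
    (hνfull : ∀ U : Set (EuclideanSpace ℝ (Fin d)),
      IsOpen U → (U ∩ Y).Nonempty → 0 < ν (U ∩ Y))
    (ε : ℝ) (hε : 0 < ε)
    (S : (EuclideanSpace ℝ (Fin d) → ℝ) → EuclideanSpace ℝ (Fin d) → ℝ)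
    (hS : ∀ ψ y₀, S ψ y₀
      = ε * Real.log (∫ y₁ in Y, Real.exp ((⟪y₀, y₁⟫ - ψ y₁) / ε) ∂ν))
    (ψ0 ψ1 : EuclideanSpace ℝ (Fin d) → ℝ)
    (hψ0 : ContinuousOn ψ0 Y) (hψ1 : ContinuousOn ψ1 Y)
    (hnc : ¬ ∃ c : ℝ, ∀ y ∈ Y, ψ1 y - ψ0 y = c) :
    (⨆ y₀ : Y, |S ψ1 y₀ - S ψ0 y₀|) < ⨆ y₁ : Y, |ψ1 y₁ - ψ0 y₁| := by
  obtain rfl : S = sinkhornUpdate (fun y₀ y₁ => ⟪y₀, y₁⟫) ν Y ε := funext₂ hS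
  have hc : ContinuousOn (uncurry fun y₀ y₁ : EuclideanSpace ℝ (Fin d) => ⟪y₀, y₁⟫) (Y ×ˢ Y) :=
    continuous_inner.continuousOn
  obtain rfl | hYne := Y.eq_empty_or_nonempty
  · exact absurd ⟨0, by simp⟩ hnc
  have := hYne.to_subtype
  set M := ⨆ y : Y, |ψ1 y - ψ0 y|
  have hM : ∀ y ∈ Y, -M ≤ ψ1 y - ψ0 y ∧ ψ1 y - ψ0 y ≤ M := fun y hy =>
    abs_le.1 (le_ciSup (image_eq_range _ _ ▸ hY.bddAbove_image (hψ1.sub hψ0).abs) ⟨y, hy⟩)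
  have hlo : ∃ y ∈ Y, -M < ψ1 y - ψ0 y := by
    by_contra! h
    exact hnc ⟨-M, fun y hy => le_antisymm (h y hy) (hM y hy).1⟩
  have hhi : ∃ y ∈ Y, -M < ψ0 y - ψ1 y := by
    by_contra! h
    exact hnc ⟨M, fun y hy => le_antisymm (hM y hy).2 (by linarith [h y hy])⟩
  obtain ⟨δ₁, hδ₁, h₁⟩ := exists_pos_forall_sinkhornUpdate_le hY hνfull hc hψ0 hψ1
    (fun y hy => (hM y hy).1) hlo hε
  obtain ⟨δ₂, hδ₂, h₂⟩ := exists_pos_forall_sinkhornUpdate_le hY hνfull hc hψ1 hψ0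
    (fun y hy => by linarith [(hM y hy).2]) hhi hε
  calc (⨆ y₀ : Y, |sinkhornUpdate _ ν Y ε ψ1 y₀ - sinkhornUpdate _ ν Y ε ψ0 y₀|)
      ≤ M - min δ₁ δ₂ := ciSup_le fun y₀ => abs_sub_le_iff.2
        ⟨by linarith [h₁ y₀ y₀.2, min_le_left δ₁ δ₂], by linarith [h₂ y₀ y₀.2, min_le_right δ₁ δ₂]⟩
    _ < M := sub_lt_self _ (lt_min hδ₁ hδ₂)

/-- the Sinkhorn update
`S(ψ)(y₀) = ε·log ∫_Y exp((⟪y₀, y₁⟫ - ψ y₁)/ε) dν`, for a fully supported probability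
measure `ν` on a compact `Y ⊆ ℝ^d`, is a strict sup-norm contraction on non-constant
differences: if `ψ¹ - ψ⁰` is not constant on `Y` then
`sup_{y₀ ∈ Y} |S ψ¹ y₀ - S ψ⁰ y₀| < sup_{y₁ ∈ Y} |ψ¹ y₁ - ψ⁰ y₁|`. -/
theorem stmt11 {d : ℕ} (Y : Set (EuclideanSpace ℝ (Fin d))) (hY : IsCompact Y)
    (ν : Measure (EuclideanSpace ℝ (Fin d))) [IsProbabilityMeasure ν]
    (hνY : ν Yᶜ = 0)
    (hνfull : ∀ U : Set (EuclideanSpace ℝ (Fin d)),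
      IsOpen U → (U ∩ Y).Nonempty → 0 < ν (U ∩ Y))
    (ε : ℝ) (hε : 0 < ε)
    (S : (EuclideanSpace ℝ (Fin d) → ℝ) → EuclideanSpace ℝ (Fin d) → ℝ)
    (hS : ∀ ψ y₀, S ψ y₀
      = ε * Real.log (∫ y₁ in Y, Real.exp ((⟪y₀, y₁⟫ - ψ y₁) / ε) ∂ν))
    (ψ0 ψ1 : EuclideanSpace ℝ (Fin d) → ℝ)
    (hψ0 : ContinuousOn ψ0 Y) (hψ1 : ContinuousOn ψ1 Y)
    (hnc : ¬ ∃ c : ℝ, ∀ y ∈ Y, ψ1 y - ψ0 y = c) :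
    (⨆ y₀ : Y, |S ψ1 y₀ - S ψ0 y₀|) < ⨆ y₁ : Y, |ψ1 y₁ - ψ0 y₁| :=
  stmt11_general Y hY ν hνfull ε hε S hS ψ0 ψ1 hψ0 hψ1 hnc
end

section
/- Let Y be a compact metric space, let μ be a Borel probability measure on Y with full support, let c > 0, and let k be a map assigning to each y ∈ Y a Borel probability measure k(y, ·) on Y such that k(y, A) ≥ c·μ(A) for every y ∈ Y and every Borel set A ⊆ Y. If a : Y → ℝ is continuous and not constant, then sup_{y ∈ Y} |∫_Y a(y') k(y, dy')| < sup_{y ∈ Y} |a(y)|; that is, averaging against a kernel uniformly bounded below by a full-support measure strictly decreases the supremum norm of every non-constant continuous function. -/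
/-!
Let `M = sup |a|` and `I = ∫ a dμ`. Since `a` is continuous and not constant, `M ∓ a` is
continuous, nonnegative and not identically zero, so the full support of `μ` gives `|I| < M`.
Because `k y ≥ c • μ` and `k y` has mass one,
`M ∓ ∫ a dk(y, ·) = ∫ (M ∓ a) dk(y, ·) ≥ c ∫ (M ∓ a) dμ = c (M ∓ I)`, hence
`|∫ a dk(y, ·)| ≤ M - c (M - |I|) < M` uniformly in `y`.
-/

open MeasureTheory
open scoped ENNReal

theorem exists_lt_of_forall_le_of_ne {ι α : Type*} [LinearOrder α] {f : ι → α} {M : α}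
    (hfM : ∀ i, f i ≤ M) {i j : ι} (hne : f i ≠ f j) : ∃ i, f i < M := by
  rcases (hfM i).lt_or_eq with h | h
  · exact ⟨i, h⟩
  · exact ⟨j, (hfM j).lt_of_ne (h ▸ hne.symm)⟩

theorem integral_le_sub_mul_of_smul_le {Y : Type*} [MeasurableSpace Y] {μ κ : Measure Y}
    [IsProbabilityMeasure μ] [IsProbabilityMeasure κ] {c : ℝ} (hc : 0 ≤ c)
    (hμκ : ENNReal.ofReal c • μ ≤ κ) {f : Y → ℝ} (hfμ : Integrable f μ) (hfκ : Integrable f κ)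
    {M : ℝ} (hfM : ∀ y, f y ≤ M) :
    ∫ y, f y ∂κ ≤ M - c * (M - ∫ y, f y ∂μ) := by
  have hmass : c * (M - ∫ y, f y ∂μ) ≤ M - ∫ y, f y ∂κ :=
    calc c * (M - ∫ y, f y ∂μ) = ∫ y, (M - f y) ∂(ENNReal.ofReal c • μ) := by
          rw [integral_smul_measure, integral_sub (integrable_const M) hfμ, integral_const]
          simp [hc]
      _ ≤ ∫ y, (M - f y) ∂κ :=
          integral_mono_measure hμκ (ae_of_all _ fun y => sub_nonneg.2 (hfM y))
            ((integrable_const M).sub hfκ)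
      _ = M - ∫ y, f y ∂κ := by
          rw [integral_sub (integrable_const M) hfκ, integral_const]
          simp
  linarith

theorem abs_integral_le_sub_mul_of_smul_le {Y : Type*} [MeasurableSpace Y]
    {μ κ : Measure Y} [IsProbabilityMeasure μ] [IsProbabilityMeasure κ] {c : ℝ} (hc : 0 ≤ c)
    (hμκ : ENNReal.ofReal c • μ ≤ κ) {f : Y → ℝ} (hfμ : Integrable f μ) (hfκ : Integrable f κ)
    {M : ℝ} (hfM : ∀ y, |f y| ≤ M) :
    |∫ y, f y ∂κ| ≤ M - c * (M - |∫ y, f y ∂μ|) := by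
  have hupper := integral_le_sub_mul_of_smul_le hc hμκ hfμ hfκ fun y =>
    (le_abs_self _).trans (hfM y)
  have hlower := integral_le_sub_mul_of_smul_le hc hμκ hfμ.neg hfκ.neg fun y =>
    (neg_le_abs _).trans (hfM y)
  simp only [Pi.neg_apply, integral_neg] at hlower
  have hle_abs := mul_le_mul_of_nonneg_left (le_abs_self (∫ y, f y ∂μ)) hc
  have hneg_le_abs := mul_le_mul_of_nonneg_left (neg_le_abs (∫ y, f y ∂μ)) hc
  rw [abs_le]
  constructor <;> linarith

section Compact

variable {Y : Type*} [TopologicalSpace Y] [CompactSpace Y] [MeasurableSpace Y]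
  [OpensMeasurableSpace Y]

theorem Continuous.integrable_of_compactSpace_s14 {f : Y → ℝ} (hf : Continuous f) (μ : Measure Y)
    [IsFiniteMeasure μ] : Integrable f μ :=
  hf.integrable_of_hasCompactSupport (HasCompactSupport.of_compactSpace f)

theorem integral_lt_of_forall_le_of_exists_lt (μ : Measure Y) [IsProbabilityMeasure μ]
    [μ.IsOpenPosMeasure] {f : Y → ℝ} (hf : Continuous f) {M : ℝ} (hfM : ∀ y, f y ≤ M)
    (hlt : ∃ y, f y < M) : ∫ y, f y ∂μ < M := by
  obtain ⟨y₀, hy₀⟩ := hlt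
  have hpos : 0 < ∫ y, (M - f y) ∂μ :=
    integral_pos_of_integrable_nonneg_nonzero (continuous_const.sub hf)
      ((integrable_const M).sub (hf.integrable_of_compactSpace_s14 μ))
      (fun y => sub_nonneg.2 (hfM y)) (sub_ne_zero.2 hy₀.ne')
  rw [integral_sub (integrable_const M) (hf.integrable_of_compactSpace_s14 μ), integral_const]
    at hpos
  simp only [probReal_univ, smul_eq_mul, one_mul] at hpos
  linarith

theorem abs_integral_lt_of_forall_abs_le_of_ne (μ : Measure Y) [IsProbabilityMeasure μ]
    [μ.IsOpenPosMeasure] {f : Y → ℝ} (hf : Continuous f) {M : ℝ} (hfM : ∀ y, |f y| ≤ M)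
    {y₁ y₂ : Y} (hne : f y₁ ≠ f y₂) : |∫ y, f y ∂μ| < M := by
  have hle : ∀ y, f y ≤ M := fun y => (le_abs_self _).trans (hfM y)
  have hle_neg : ∀ y, -f y ≤ M := fun y => (neg_le_abs _).trans (hfM y)
  refine abs_lt.2 ⟨?_, integral_lt_of_forall_le_of_exists_lt μ hf hle
    (exists_lt_of_forall_le_of_ne hle hne)⟩
  have := integral_lt_of_forall_le_of_exists_lt μ hf.neg hle_neg
    (exists_lt_of_forall_le_of_ne hle_neg (neg_injective.ne hne))
  simp only [Pi.neg_apply, integral_neg] at this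
  linarith

end Compact

/-- averaging against a Markov kernel `k` that is uniformly bounded below
by `c·μ` for a fully supported probability measure `μ` on a compact metric space strictly
decreases the supremum norm of every non-constant continuous function:
`sup_y |∫ a dk(y, ·)| < sup_y |a y|`. -/
theorem stmt14 {Y : Type*} [MetricSpace Y] [CompactSpace Y]
    [MeasurableSpace Y] [BorelSpace Y]
    (μ : Measure Y) [IsProbabilityMeasure μ]
    (hfull : ∀ U : Set Y, IsOpen U → U.Nonempty → 0 < μ U)
    (c : ℝ) (hc : 0 < c)
    (k : Y → Measure Y) (hk : ∀ y, IsProbabilityMeasure (k y))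
    (hlow : ∀ y : Y, ∀ A : Set Y, MeasurableSet A → ENNReal.ofReal c * μ A ≤ k y A)
    (a : Y → ℝ) (ha : Continuous a) (hnc : ∃ y y', a y ≠ a y') :
    (⨆ y : Y, |∫ y', a y' ∂(k y)|) < ⨆ y : Y, |a y| := by
  obtain ⟨y₁, y₂, hne⟩ := hnc
  have : Nonempty Y := ⟨y₁⟩
  have : μ.IsOpenPosMeasure := ⟨fun U hU hU₀ => (hfull U hU hU₀).ne'⟩
  set M := ⨆ y, |a y|
  have habs : ∀ y, |a y| ≤ M := le_ciSup (isCompact_range ha.abs).bddAbove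
  have hbound : ∀ y, |∫ y', a y' ∂(k y)| ≤ M - c * (M - |∫ y', a y' ∂μ|) := by
    intro y
    have := hk y
    have hμk : ENNReal.ofReal c • μ ≤ k y :=
      Measure.le_iff.2 fun A hA => by simpa using hlow y A hA
    exact abs_integral_le_sub_mul_of_smul_le hc.le hμk (ha.integrable_of_compactSpace_s14 μ)
      (ha.integrable_of_compactSpace_s14 (k y)) habs
  have hgap : 0 < M - |∫ y', a y' ∂μ| :=
    sub_pos.2 (abs_integral_lt_of_forall_abs_le_of_ne μ ha habs hne)
  calc (⨆ y, |∫ y', a y' ∂(k y)|) ≤ M - c * (M - |∫ y', a y' ∂μ|) := ciSup_le hbound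
    _ < M := sub_lt_self M (mul_pos hc hgap)
end

section
/- Let Y = [a, b] ⊂ ℝ be a compact interval, let μ and ν be Borel probability measures on Y, let ε > 0, and let φ, ψ : Y → ℝ be continuous functions satisfying the Sinkhorn system: φ(y₀) = ε·log ∫_Y exp((y₀·y₁ − ψ(y₁))/ε) dν(y₁) for all y₀ ∈ Y, and ψ(y₁) = ε·log ∫_Y exp((y₀·y₁ − φ(y₀))/ε) dμ(y₀) for all y₁ ∈ Y. Let π be the Sinkhorn coupling with density exp((y₀·y₁ − φ(y₀) − ψ(y₁))/ε) with respect to μ ⊗ ν, and extend φ and ψ to twice differentiable functions on ℝ via their defining log-integral formulas. Then ∫_{Y×Y} (y₀ + y₁)² dπ(y₀, y₁) = ∫_Y [(y₀ + φ'(y₀))² + ε·φ''(y₀)] dμ(y₀) = ∫_Y [(y₁ + ψ'(y₁))² + ε·ψ''(y₁)] dν(y₁). -/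
/-!
Fix `y₀ = x`. Let `ρ = e^{-ψ/ε} ν` on `Y`. The first Sinkhorn equation says that `e^{φ(x)/ε}` is
the moment generating function of `ρ` at `x/ε`, i.e. `φ(x) = ε · cgf_ρ(x/ε)`. So the conditional
law of `y₁` under the coupling, with density `exp((x y₁ - φ x - ψ y₁)/ε)` against `ν`, is `ρ`
tilted by `x/ε`. Its mean is `cgf_ρ'(x/ε) = Φ'(x)` and its variance is `cgf_ρ''(x/ε) = ε Φ''(x)`,
so `∫ (x + y₁)²` against it is `(x + Φ'(x))² + ε Φ''(x)`. Integrating in `x` against `μ`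
(Fubini) gives the first identity. The second one follows in the same way once the roles of the
two marginals are exchanged.
-/

open MeasureTheory ProbabilityTheory

section

open Real

section Tilted

variable {Ω : Type*} [MeasurableSpace Ω] {μ : Measure Ω} {X : Ω → ℝ} {t : ℝ}

lemma integral_const_add_sq [IsProbabilityMeasure μ] (hX : MemLp X 2 μ) (c : ℝ) :
    μ[fun ω => (c + X ω) ^ 2] = (c + μ[X]) ^ 2 + Var[X; μ] := by
  have hcX : MemLp (fun ω => c + X ω) 2 μ := (memLp_const c).add hX
  rw [← variance_const_add hX.aestronglyMeasurable c, variance_eq_sub hcX,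
    integral_add (integrable_const c) (hX.integrable one_le_two)]
  simp

lemma integral_tilted_const_add_sq [NeZero μ] (ht : t ∈ interior (integrableExpSet X μ))
    (c : ℝ) :
    (μ.tilted (t * X ·))[fun ω => (c + X ω) ^ 2]
      = (c + deriv (cgf X μ) t) ^ 2 + iteratedDeriv 2 (cgf X μ) t := by
  have := isProbabilityMeasure_tilted (interior_subset (s := integrableExpSet X μ) ht)
  rw [integral_const_add_sq (memLp_tilted_mul ht 2) c, integral_tilted_mul_self ht,
    variance_tilted_mul ht]

end Tilted

lemma deriv_const_mul_comp_div (f : ℝ → ℝ) {c : ℝ} (hc : c ≠ 0) :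
    deriv (fun x => c * f (x / c)) = fun x => deriv f (x / c) := by
  ext x
  simp_rw [div_eq_inv_mul, deriv_const_mul_field']
  rw [deriv_comp_mul_left (f := f), smul_eq_mul, mul_inv_cancel_left₀ hc]

lemma deriv_deriv_const_mul_comp_div (f : ℝ → ℝ) {c : ℝ} (hc : c ≠ 0) (x : ℝ) :
    deriv (deriv fun x => c * f (x / c)) x = c⁻¹ * iteratedDeriv 2 f (x / c) := by
  rw [iteratedDeriv_succ, iteratedDeriv_one, deriv_const_mul_comp_div f hc]
  simp_rw [div_eq_inv_mul]
  rw [deriv_comp_mul_left (f := deriv f), smul_eq_mul]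

section Potential

variable {τ : Measure ℝ} {K : Set ℝ} {g : ℝ → ℝ} {ε : ℝ}

noncomputable def weightedByPotential (τ : Measure ℝ) (K : Set ℝ) (g : ℝ → ℝ) (ε : ℝ) :
    Measure ℝ :=
  (τ.restrict K).withDensity fun y => ENNReal.ofReal (exp (-g y / ε))

lemma aemeasurable_ofReal_exp_neg_div (hK : IsCompact K) (hg : ContinuousOn g K) :
    AEMeasurable (fun y => ENNReal.ofReal (exp (-g y / ε))) (τ.restrict K) :=
  ((hg.neg.div_const ε).rexp.aemeasurable hK.measurableSet).ennreal_ofReal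

lemma isFiniteMeasure_weightedByPotential [IsFiniteMeasure τ] (hK : IsCompact K)
    (hg : ContinuousOn g K) : IsFiniteMeasure (weightedByPotential τ K g ε) :=
  isFiniteMeasure_withDensity_ofReal ((hg.neg.div_const ε).rexp.integrableOn_compact hK).2

lemma neZero_weightedByPotential (hK : IsCompact K) (hg : ContinuousOn g K) (hτK : τ K ≠ 0) :
    NeZero (weightedByPotential τ K g ε) := by
  refine ⟨fun h => hτK ?_⟩
  rw [weightedByPotential, withDensity_eq_zero_iff (aemeasurable_ofReal_exp_neg_div hK hg)] at h
  have hfalse : ∀ᵐ y ∂τ.restrict K, False := by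
    filter_upwards [h] with y hy
    exact ENNReal.ofReal_ne_zero_iff.2 (exp_pos _) hy
  rwa [Filter.eventually_false_iff_eq_bot, ae_eq_bot, Measure.restrict_eq_zero] at hfalse

lemma integrable_exp_mul_weightedByPotential [IsFiniteMeasure τ] (hK : IsCompact K)
    (hg : ContinuousOn g K) (t : ℝ) :
    Integrable (fun y => exp (t * y)) (weightedByPotential τ K g ε) := by
  have := isFiniteMeasure_weightedByPotential (τ := τ) (ε := ε) hK hg
  have hae : ∀ᵐ y ∂weightedByPotential τ K g ε, y ∈ K :=
    (withDensity_absolutelyContinuous _ _).ae_le (ae_restrict_mem hK.measurableSet)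
  rw [← Measure.restrict_eq_self_of_ae_mem hae]
  exact (by fun_prop : Continuous fun y => exp (t * y)).continuousOn.integrableOn_compact hK

lemma mgf_weightedByPotential (hK : IsCompact K) (hg : ContinuousOn g K) (hε : ε ≠ 0)
    (x : ℝ) :
    mgf id (weightedByPotential τ K g ε) (x / ε) = ∫ y in K, exp ((x * y - g y) / ε) ∂τ := by
  rw [mgf, weightedByPotential, integral_withDensity_eq_integral_toReal_smul₀
    (aemeasurable_ofReal_exp_neg_div hK hg) (ae_of_all _ fun _ => ENNReal.ofReal_lt_top)]
  refine integral_congr_ae (ae_of_all _ fun y => ?_)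
  dsimp only [id]
  rw [ENNReal.toReal_ofReal (exp_pos _).le, smul_eq_mul, ← exp_add]
  congr 1
  field_simp
  ring

lemma setIntegral_sq_mul_exp_eq_integral_tilted [IsFiniteMeasure τ] (hK : IsCompact K)
    (hg : ContinuousOn g K) (hτK : τ K ≠ 0) (hε : ε ≠ 0) {x c : ℝ}
    (hc : c = ε * cgf id (weightedByPotential τ K g ε) (x / ε)) :
    ∫ y in K, (x + y) ^ 2 * exp ((x * y - c - g y) / ε) ∂τ
      = ((weightedByPotential τ K g ε).tilted (x / ε * id ·))[fun y => (x + y) ^ 2] := by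
  have := neZero_weightedByPotential (ε := ε) hK hg hτK
  have hmgf : mgf id (weightedByPotential τ K g ε) (x / ε) = exp (c / ε) := by
    rw [hc, mul_div_cancel_left₀ _ hε,
      exp_cgf (X := id) (integrable_exp_mul_weightedByPotential hK hg _)]
  rw [integral_tilted_mul_eq_mgf, hmgf, weightedByPotential,
    integral_withDensity_eq_integral_toReal_smul₀ (aemeasurable_ofReal_exp_neg_div hK hg)
      (ae_of_all _ fun _ => ENNReal.ofReal_lt_top)]
  refine integral_congr_ae (ae_of_all _ fun y => ?_)
  dsimp only [id]
  rw [ENNReal.toReal_ofReal (exp_pos _).le, smul_eq_mul, smul_eq_mul, ← exp_sub, ← mul_assoc,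
    ← exp_add, mul_comm]
  congr 2
  field_simp
  ring

end Potential

lemma setIntegral_setIntegral_sq_mul_sinkhornKernel {τ : Measure ℝ} [IsFiniteMeasure τ]
    (σ : Measure ℝ) {K : Set ℝ} {f g : ℝ → ℝ} {ε : ℝ} (hK : IsCompact K)
    (hτK : τ K ≠ 0) (hε : ε ≠ 0) (hg : ContinuousOn g K)
    (hS : ∀ x ∈ K, f x = ε * log (∫ y in K, exp ((x * y - g y) / ε) ∂τ)) :
    ∫ x in K, ∫ y in K, (x + y) ^ 2 * exp ((x * y - f x - g y) / ε) ∂τ ∂σ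
      = ∫ x in K, ((x + deriv (fun x => ε * log (∫ y in K, exp ((x * y - g y) / ε) ∂τ)) x) ^ 2
          + ε * deriv (deriv fun x => ε * log (∫ y in K, exp ((x * y - g y) / ε) ∂τ)) x) ∂σ := by
  set ρ := weightedByPotential τ K g ε
  have := neZero_weightedByPotential (ε := ε) hK hg hτK
  have hF : (fun x => ε * log (∫ y in K, exp ((x * y - g y) / ε) ∂τ))
      = fun x => ε * cgf id ρ (x / ε) := by
    ext x
    rw [cgf, mgf_weightedByPotential hK hg hε]
  have hρ (t : ℝ) : t ∈ interior (integrableExpSet id ρ) := by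
    simp [integrableExpSet, ρ, integrable_exp_mul_weightedByPotential hK hg]
  rw [hF]
  refine setIntegral_congr_fun hK.measurableSet fun x hx => ?_
  rw [setIntegral_sq_mul_exp_eq_integral_tilted hK hg hτK hε ((hS x hx).trans (congrFun hF x)),
    deriv_deriv_const_mul_comp_div _ hε, deriv_const_mul_comp_div _ hε, mul_inv_cancel_left₀ hε]
  exact integral_tilted_const_add_sq (hρ _) x

section Coupling

variable {μ ν : Measure ℝ} {K : Set ℝ} {φ ψ : ℝ → ℝ} {ε : ℝ}

lemma continuousOn_sinkhornDensity (hφ : ContinuousOn φ K) (hψ : ContinuousOn ψ K) :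
    ContinuousOn (fun p : ℝ × ℝ => exp ((p.1 * p.2 - φ p.1 - ψ p.2) / ε)) (K ×ˢ K) :=
  ((((continuous_fst.mul continuous_snd).continuousOn.sub
    (hφ.comp continuous_fst.continuousOn fun _ hp => hp.1)).sub
    (hψ.comp continuous_snd.continuousOn fun _ hp => hp.2)).div_const ε).rexp

lemma setIntegral_sinkhornCoupling [SFinite μ] [SFinite ν] (hK : IsCompact K)
    (hφ : ContinuousOn φ K) (hψ : ContinuousOn ψ K) (f : ℝ × ℝ → ℝ) :
    ∫ p in K ×ˢ K, f p ∂(μ.prod ν).withDensity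
        (fun p => ENNReal.ofReal (exp ((p.1 * p.2 - φ p.1 - ψ p.2) / ε)))
      = ∫ p, f p * exp ((p.1 * p.2 - φ p.1 - ψ p.2) / ε) ∂(μ.restrict K).prod (ν.restrict K) := by
  have hKK := (hK.prod hK).measurableSet
  rw [setIntegral_withDensity_eq_setIntegral_toReal_smul₀
    ((continuousOn_sinkhornDensity hφ hψ).aemeasurable hKK).ennreal_ofReal
    (ae_of_all _ fun _ => ENNReal.ofReal_lt_top) f hKK, Measure.prod_restrict]
  refine integral_congr_ae (ae_of_all _ fun p => ?_)
  dsimp only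
  rw [ENNReal.toReal_ofReal (exp_pos _).le, smul_eq_mul, mul_comm]

lemma integrable_sq_mul_sinkhornDensity [IsFiniteMeasure μ] [IsFiniteMeasure ν]
    (hK : IsCompact K) (hφ : ContinuousOn φ K) (hψ : ContinuousOn ψ K) :
    Integrable (fun p : ℝ × ℝ => (p.1 + p.2) ^ 2 * exp ((p.1 * p.2 - φ p.1 - ψ p.2) / ε))
      ((μ.restrict K).prod (ν.restrict K)) := by
  rw [Measure.prod_restrict]
  exact ((continuous_fst.add continuous_snd).pow 2).continuousOn.mul
    (continuousOn_sinkhornDensity hφ hψ) |>.integrableOn_compact (hK.prod hK)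

end Coupling

end

theorem stmt17_general (a b : ℝ)
    (μ ν : Measure ℝ) [IsProbabilityMeasure μ] [IsProbabilityMeasure ν]
    (hμY : μ (Set.Icc a b)ᶜ = 0) (hνY : ν (Set.Icc a b)ᶜ = 0)
    (ε : ℝ) (hε : 0 < ε)
    (φ ψ : ℝ → ℝ)
    (hφc : ContinuousOn φ (Set.Icc a b)) (hψc : ContinuousOn ψ (Set.Icc a b))
    (hS1 : ∀ y₀ ∈ Set.Icc a b, φ y₀
      = ε * Real.log (∫ y₁ in Set.Icc a b, Real.exp ((y₀ * y₁ - ψ y₁) / ε) ∂ν))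
    (hS2 : ∀ y₁ ∈ Set.Icc a b, ψ y₁
      = ε * Real.log (∫ y₀ in Set.Icc a b, Real.exp ((y₀ * y₁ - φ y₀) / ε) ∂μ))
    (π : Measure (ℝ × ℝ))
    (hπ : π = (μ.prod ν).withDensity
      (fun p => ENNReal.ofReal (Real.exp ((p.1 * p.2 - φ p.1 - ψ p.2) / ε))))
    (Φ Ψ : ℝ → ℝ)
    (hΦ : Φ = fun y₀ =>
      ε * Real.log (∫ y₁ in Set.Icc a b, Real.exp ((y₀ * y₁ - ψ y₁) / ε) ∂ν))
    (hΨ : Ψ = fun y₁ =>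
      ε * Real.log (∫ y₀ in Set.Icc a b, Real.exp ((y₀ * y₁ - φ y₀) / ε) ∂μ)) :
    (∫ p in Set.Icc a b ×ˢ Set.Icc a b, (p.1 + p.2) ^ 2 ∂π
      = ∫ y₀ in Set.Icc a b, ((y₀ + deriv Φ y₀) ^ 2 + ε * deriv (deriv Φ) y₀) ∂μ) ∧
    (∫ p in Set.Icc a b ×ˢ Set.Icc a b, (p.1 + p.2) ^ 2 ∂π
      = ∫ y₁ in Set.Icc a b, ((y₁ + deriv Ψ y₁) ^ 2 + ε * deriv (deriv Ψ) y₁) ∂ν) := by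
  subst hπ hΦ hΨ
  have hK : IsCompact (Set.Icc a b) := isCompact_Icc
  have hμK : μ (Set.Icc a b) ≠ 0 := by simp [(prob_compl_eq_zero_iff measurableSet_Icc).1 hμY]
  have hνK : ν (Set.Icc a b) ≠ 0 := by simp [(prob_compl_eq_zero_iff measurableSet_Icc).1 hνY]
  have hint := integrable_sq_mul_sinkhornDensity (μ := μ) (ν := ν) (ε := ε) hK hφc hψc
  rw [setIntegral_sinkhornCoupling hK hφc hψc]
  constructor
  · rw [integral_prod _ hint]
    exact setIntegral_setIntegral_sq_mul_sinkhornKernel μ hK hνK hε.ne' hψc hS1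
  · have hswap : (fun y₁ => ε * Real.log (∫ y₀ in Set.Icc a b, Real.exp ((y₀ * y₁ - φ y₀) / ε) ∂μ))
        = fun y => ε * Real.log (∫ x in Set.Icc a b, Real.exp ((y * x - φ x) / ε) ∂μ) := by
      simp only [mul_comm]
    rw [hswap, integral_prod_symm _ hint]
    refine Eq.trans ?_ (setIntegral_setIntegral_sq_mul_sinkhornKernel ν hK hμK hε.ne' hφc
      fun y hy => (hS2 y hy).trans (congrFun hswap y))
    congr! 4 with y x
    ring_nf

/-- variance functional: for Sinkhorn potentials `(φ, ψ)` on a compact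
interval `Y = [a, b]` with coupling `π` of density `exp((y₀·y₁ - φ y₀ - ψ y₁)/ε)` w.r.t.
`μ ⊗ ν`, and `Φ, Ψ` the twice differentiable extensions of `φ, ψ` to `ℝ` via their
defining log-integral formulas,
`∫_{Y×Y} (y₀+y₁)² dπ = ∫_Y [(y₀+Φ'(y₀))² + ε·Φ''(y₀)] dμ
  = ∫_Y [(y₁+Ψ'(y₁))² + ε·Ψ''(y₁)] dν`. -/
theorem stmt17 (a b : ℝ) (hab : a ≤ b)
    (μ ν : Measure ℝ) [IsProbabilityMeasure μ] [IsProbabilityMeasure ν]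
    (hμY : μ (Set.Icc a b)ᶜ = 0) (hνY : ν (Set.Icc a b)ᶜ = 0)
    (ε : ℝ) (hε : 0 < ε)
    (φ ψ : ℝ → ℝ) (hφm : Measurable φ) (hψm : Measurable ψ)
    (hφc : ContinuousOn φ (Set.Icc a b)) (hψc : ContinuousOn ψ (Set.Icc a b))
    (hS1 : ∀ y₀ ∈ Set.Icc a b, φ y₀
      = ε * Real.log (∫ y₁ in Set.Icc a b, Real.exp ((y₀ * y₁ - ψ y₁) / ε) ∂ν))
    (hS2 : ∀ y₁ ∈ Set.Icc a b, ψ y₁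
      = ε * Real.log (∫ y₀ in Set.Icc a b, Real.exp ((y₀ * y₁ - φ y₀) / ε) ∂μ))
    (π : Measure (ℝ × ℝ))
    (hπ : π = (μ.prod ν).withDensity
      (fun p => ENNReal.ofReal (Real.exp ((p.1 * p.2 - φ p.1 - ψ p.2) / ε))))
    (Φ Ψ : ℝ → ℝ)
    (hΦ : Φ = fun y₀ =>
      ε * Real.log (∫ y₁ in Set.Icc a b, Real.exp ((y₀ * y₁ - ψ y₁) / ε) ∂ν))
    (hΨ : Ψ = fun y₁ =>
      ε * Real.log (∫ y₀ in Set.Icc a b, Real.exp ((y₀ * y₁ - φ y₀) / ε) ∂μ)) :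
    (∫ p in Set.Icc a b ×ˢ Set.Icc a b, (p.1 + p.2) ^ 2 ∂π
      = ∫ y₀ in Set.Icc a b, ((y₀ + deriv Φ y₀) ^ 2 + ε * deriv (deriv Φ) y₀) ∂μ) ∧
    (∫ p in Set.Icc a b ×ˢ Set.Icc a b, (p.1 + p.2) ^ 2 ∂π
      = ∫ y₁ in Set.Icc a b, ((y₁ + deriv Ψ y₁) ^ 2 + ε * deriv (deriv Ψ) y₁) ∂ν) :=
  stmt17_general a b μ ν hμY hνY ε hε φ ψ hφc hψc hS1 hS2 π hπ Φ Ψ hΦ hΨ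
end

section
/- Let Y ⊆ ℝ^d be compact, let μ be a Borel probability measure on Y, let ε > 0, and let φ : Y → ℝ be continuous. For each y₁ ∈ Y define f_{y₁} : Y → ℝ by f_{y₁}(y₀) := exp((⟨y₀, y₁⟩ − φ(y₀))/ε) / ∫_Y exp((⟨y₀'', y₁⟩ − φ(y₀''))/ε) dμ(y₀''). Then the family {f_{y₁} : y₁ ∈ Y} is uniformly bounded (there exists C < ∞ with |f_{y₁}(y₀)| ≤ C for all y₀, y₁ ∈ Y) and uniformly equicontinuous: for every δ > 0 there exists η > 0 such that for all y₁ ∈ Y and all y₀, y₀' ∈ Y with ‖y₀ − y₀'‖ < η, |f_{y₁}(y₀) − f_{y₁}(y₀')| < δ. -/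
open MeasureTheory
open scoped RealInnerProductSpace ENNReal

/-!
The density `f y₁ y₀` is jointly continuous in `(y₁, y₀)` on the compact set `Y ×ˢ Y`: the
normalising integral is continuous in `y₁` by dominated convergence (the integrand is bounded on
`Y ×ˢ Y`) and positive because `μ Y = 1`. Boundedness and uniform equicontinuity then come from
compactness of `Y ×ˢ Y` (Heine–Cantor).
-/

theorem continuousOn_setIntegral_of_continuousOn_prod {X Z E : Type*} [TopologicalSpace X]
    [FirstCountableTopology X]
    [TopologicalSpace Z] [T2Space Z] [MeasurableSpace Z] [OpensMeasurableSpace Z]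
    [NormedAddCommGroup E] [NormedSpace ℝ E] {μ : Measure Z} [IsFiniteMeasureOnCompacts μ]
    {F : X → Z → E} {s : Set X} {K : Set Z} (hs : IsCompact s) (hK : IsCompact K)
    (hF : ContinuousOn F.uncurry (s ×ˢ K)) :
    ContinuousOn (fun x ↦ ∫ z in K, F x z ∂μ) s := by
  obtain ⟨M, hM⟩ := (hs.prod hK).exists_bound_of_continuousOn hF
  have hF_left : ∀ x ∈ s, ContinuousOn (F x) K := fun x hx ↦
    hF.comp (Continuous.prodMk_right x).continuousOn fun z hz ↦ ⟨hx, hz⟩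
  have hF_right : ∀ z ∈ K, ContinuousOn (fun x ↦ F x z) s := fun z hz ↦
    hF.comp (Continuous.prodMk_left z).continuousOn fun x hx ↦ ⟨hx, hz⟩
  refine continuousOn_of_dominated (bound := fun _ ↦ M)
    (fun x hx ↦ (hF_left x hx).aestronglyMeasurable_of_isCompact hK hK.measurableSet)
    (fun x hx ↦ ?_) (integrableOn_const hK.measure_ne_top) ?_
  · filter_upwards [ae_restrict_mem hK.measurableSet] with z hz using hM (x, z) ⟨hx, hz⟩
  · filter_upwards [ae_restrict_mem hK.measurableSet] with z hz using hF_right z hz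

theorem IsCompact.exists_pos_forall_dist_lt_of_continuousOn_prod {α β γ : Type*}
    [PseudoMetricSpace α] [PseudoMetricSpace β] [PseudoMetricSpace γ] {s : Set α} {t : Set β}
    (hs : IsCompact s) (ht : IsCompact t) {F : α → β → γ} (hF : ContinuousOn F.uncurry (s ×ˢ t))
    {δ : ℝ} (hδ : 0 < δ) :
    ∃ η > 0, ∀ x ∈ s, ∀ y ∈ t, ∀ y' ∈ t, dist y y' < η → dist (F x y) (F x y') < δ := by
  obtain ⟨η, hη, hF_unif⟩ :=
    Metric.uniformContinuousOn_iff.1 ((hs.prod ht).uniformContinuousOn_of_continuous hF) δ hδ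
  refine ⟨η, hη, fun x hx y hy y' hy' hyy' ↦ hF_unif (x, y) ⟨hx, hy⟩ (x, y') ⟨hx, hy'⟩ ?_⟩
  rwa [Prod.dist_eq, dist_self, max_eq_right dist_nonneg]

theorem stmt18_general {d : ℕ} (Y : Set (EuclideanSpace ℝ (Fin d))) (hY : IsCompact Y)
    (μ : Measure (EuclideanSpace ℝ (Fin d))) [IsProbabilityMeasure μ]
    (hμY : μ Yᶜ = 0)
    (ε : ℝ)
    (φ : EuclideanSpace ℝ (Fin d) → ℝ) (hφ : ContinuousOn φ Y)
    (f : EuclideanSpace ℝ (Fin d) → EuclideanSpace ℝ (Fin d) → ℝ)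
    (hf : ∀ y₁ y₀, f y₁ y₀
      = Real.exp ((⟪y₀, y₁⟫ - φ y₀) / ε)
        / ∫ z in Y, Real.exp ((⟪z, y₁⟫ - φ z) / ε) ∂μ) :
    (∃ C : ℝ, ∀ y₁ ∈ Y, ∀ y₀ ∈ Y, |f y₁ y₀| ≤ C) ∧
    (∀ δ : ℝ, 0 < δ → ∃ η : ℝ, 0 < η ∧
      ∀ y₁ ∈ Y, ∀ y₀ ∈ Y, ∀ y₀' ∈ Y,
        ‖y₀ - y₀'‖ < η → |f y₁ y₀ - f y₁ y₀'| < δ) := by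
  set g : EuclideanSpace ℝ (Fin d) → EuclideanSpace ℝ (Fin d) → ℝ :=
    fun y₁ y₀ ↦ Real.exp ((⟪y₀, y₁⟫ - φ y₀) / ε)
  have hg : ContinuousOn g.uncurry (Y ×ˢ Y) := by
    have hφ_snd : ContinuousOn (fun p : _ × _ ↦ φ p.2) (Y ×ˢ Y) :=
      hφ.comp continuousOn_snd fun p hp ↦ hp.2
    exact (((continuous_snd.inner continuous_fst).continuousOn.sub hφ_snd).div_const ε).rexp
  have hμY_ne : NeZero (μ.restrict Y) := by
    rw [prob_compl_eq_zero_iff hY.measurableSet] at hμY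
    exact ⟨by simp [hμY]⟩
  have hZ_pos : ∀ y₁ ∈ Y, 0 < ∫ z in Y, g y₁ z ∂μ := fun y₁ hy₁ ↦
    integral_exp_pos <| (hg.comp (Continuous.prodMk_right y₁).continuousOn
      fun z hz ↦ ⟨hy₁, hz⟩).integrableOn_compact hY
  have hf_cont : ContinuousOn f.uncurry (Y ×ˢ Y) := by
    have hf_eq : f = fun y₁ y₀ ↦ g y₁ y₀ / ∫ z in Y, g y₁ z ∂μ := by
      funext y₁ y₀; exact hf y₁ y₀
    rw [hf_eq]
    exact hg.div ((continuousOn_setIntegral_of_continuousOn_prod hY hY hg).comp continuousOn_fst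
      fun p hp ↦ hp.1) fun p hp ↦ (hZ_pos p.1 hp.1).ne'
  obtain ⟨C, hC⟩ := (hY.prod hY).exists_bound_of_continuousOn hf_cont
  refine ⟨⟨C, fun y₁ hy₁ y₀ hy₀ ↦ hC (y₁, y₀) ⟨hy₁, hy₀⟩⟩, fun δ hδ ↦ ?_⟩
  simpa only [dist_eq_norm, Real.norm_eq_abs] using
    hY.exists_pos_forall_dist_lt_of_continuousOn_prod hY hf_cont hδ

/-- the family of normalized tilted densities
`f_{y₁}(y₀) = exp((⟪y₀,y₁⟫ - φ y₀)/ε) / ∫_Y exp((⟪y₀'',y₁⟫ - φ y₀'')/ε) dμ(y₀'')`,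
indexed by `y₁ ∈ Y`, is uniformly bounded and uniformly equicontinuous on a compact
`Y ⊆ ℝ^d`. -/
theorem stmt18 {d : ℕ} (Y : Set (EuclideanSpace ℝ (Fin d))) (hY : IsCompact Y)
    (μ : Measure (EuclideanSpace ℝ (Fin d))) [IsProbabilityMeasure μ]
    (hμY : μ Yᶜ = 0)
    (ε : ℝ) (hε : 0 < ε)
    (φ : EuclideanSpace ℝ (Fin d) → ℝ) (hφ : ContinuousOn φ Y)
    (f : EuclideanSpace ℝ (Fin d) → EuclideanSpace ℝ (Fin d) → ℝ)
    (hf : ∀ y₁ y₀, f y₁ y₀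
      = Real.exp ((⟪y₀, y₁⟫ - φ y₀) / ε)
        / ∫ z in Y, Real.exp ((⟪z, y₁⟫ - φ z) / ε) ∂μ) :
    (∃ C : ℝ, ∀ y₁ ∈ Y, ∀ y₀ ∈ Y, |f y₁ y₀| ≤ C) ∧
    (∀ δ : ℝ, 0 < δ → ∃ η : ℝ, 0 < η ∧
      ∀ y₁ ∈ Y, ∀ y₀ ∈ Y, ∀ y₀' ∈ Y,
        ‖y₀ - y₀'‖ < η → |f y₁ y₀ - f y₁ y₀'| < δ) :=
  stmt18_general Y hY μ hμY ε φ hφ f hf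
end
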